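/- arXiv:2306.13464 — 4 statements merged into one kernel-verified Lean document; each statement's English description precedes it below -/
import Mathlib

section
/- Let α ≥ 0 and β > 0 be integers and set d = 2α + β. Then the binary forms (x²+y²)^α (x+iy)^β and (x²+y²)^α (x−iy)^β are isotropic for the Bombieri–Weyl form; that is, Q_d((x²+y²)^α (x+iy)^β, (x²+y²)^α (x+iy)^β) = 0 and Q_d((x²+y²)^α (x−iy)^β, (x²+y²)^α (x−iy)^β) = 0. -/
/-!
For the Bombieri–Weyl form, multiplication by the linear form `ℓ_c = x + c y` is adjoint, up to
the factor `1 / (d + 1)`, to the derivation `D_c = ∂ₓ + c ∂ᵧ`. When `c² = -1` we have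
`x² + y² = ℓ_c ℓ_{-c}`, `D_c ℓ_c = 0` and `D_c ℓ_{-c} = 2`, so the form is `ℓ_c^(α+β) ℓ_{-c}^α`
and `D_c^(α+β)` kills it because `α + β > α`. Moving the `α + β` factors `ℓ_c` across one at a
time turns `Q_d(f, f)` into a multiple of `Q_α(ℓ_{-c}^α, D_c^(α+β) f) = 0`. Taking `c = ±i` gives
both claims.
-/

open MvPolynomial Complex

/-- The Bombieri–Weyl form on binary forms of degree `d`:
`Q_d(f,g) = ∑_{k=0}^{d} (binom(d,k))⁻¹ · (coeff of x^{d−k}y^{k} in f) · (coeff of x^{d−k}y^{k} in g)`. -/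
noncomputable def BW (d : ℕ) (f g : MvPolynomial (Fin 2) ℂ) : ℂ :=
  ∑ k ∈ Finset.range (d + 1),
    ((d.choose k : ℂ))⁻¹ *
      MvPolynomial.coeff (Finsupp.single 0 (d - k) + Finsupp.single 1 k) f *
      MvPolynomial.coeff (Finsupp.single 0 (d - k) + Finsupp.single 1 k) g

theorem Derivation.iterate_mul_pow_eq_zero {R A : Type*} [CommSemiring R] [CommSemiring A]
    [Algebra R A] (D : Derivation R A A) {p v : A} {r : R} (hp : D p = 0)
    (hv : D v = algebraMap R A r) {b n : ℕ} (hbn : b < n) : (⇑D)^[n] (p * v ^ b) = 0 := by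
  induction b generalizing n with
  | zero =>
    obtain ⟨m, rfl⟩ : ∃ m, n = m + 1 := ⟨n - 1, by omega⟩
    rw [Function.iterate_succ_apply, pow_zero, mul_one, hp, iterate_map_zero]
  | succ b ih =>
    obtain ⟨m, rfl⟩ : ∃ m, n = m + 1 := ⟨n - 1, by omega⟩
    have hstep : D (p * v ^ (b + 1)) = ((b + 1 : ℕ) * r) • (p * v ^ b) := by
      rw [D.leibniz, D.leibniz_pow, hp, hv, Nat.add_sub_cancel, smul_zero, add_zero, nsmul_eq_mul,
        smul_eq_mul, smul_eq_mul, Algebra.smul_def, map_mul, _root_.map_natCast]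
      ring
    have hsmul (s : R) (x : A) : (⇑D)^[m] (s • x) = s • (⇑D)^[m] x := by
      rw [← Derivation.coeFn_coe, ← Module.End.pow_apply, ← Module.End.pow_apply, _root_.map_smul]
    rw [Function.iterate_succ_apply, hstep, hsmul, ih (by omega), smul_zero]

lemma inv_choose_succ {K : Type*} [Field K] [CharZero K] {d k : ℕ} (hk : k ≤ d) :
    ((d + 1).choose k : K)⁻¹ = ((d : K) + 1)⁻¹ * (d.choose k : K)⁻¹ * ((d - k : ℕ) + 1) := by
  have h := Nat.choose_mul_succ_eq d k
  rw [show d + 1 - k = d - k + 1 by omega] at h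
  have h0 : (d.choose k : K) ≠ 0 := by exact_mod_cast (Nat.choose_pos hk).ne'
  have h1 : ((d + 1).choose k : K) ≠ 0 := by exact_mod_cast (Nat.choose_pos (by omega)).ne'
  have hK : (d.choose k : K) * (d + 1) = ((d + 1).choose k : K) * ((d - k : ℕ) + 1) := by
    exact_mod_cast h
  field_simp
  linear_combination hK

lemma inv_choose_succ_succ {K : Type*} [Field K] [CharZero K] {d k : ℕ} (hk : k ≤ d) :
    ((d + 1).choose (k + 1) : K)⁻¹ = ((d : K) + 1)⁻¹ * (d.choose k : K)⁻¹ * ((k : K) + 1) := by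
  have h := Nat.add_one_mul_choose_eq d k
  have h0 : (d.choose k : K) ≠ 0 := by exact_mod_cast (Nat.choose_pos hk).ne'
  have h1 : ((d + 1).choose (k + 1) : K) ≠ 0 := by exact_mod_cast (Nat.choose_pos (by omega)).ne'
  have hK : ((d : K) + 1) * d.choose k = ((d + 1).choose (k + 1) : K) * (k + 1) := by
    exact_mod_cast h
  field_simp
  linear_combination hK

lemma BW_add_left (d : ℕ) (f₁ f₂ g : MvPolynomial (Fin 2) ℂ) :
    BW d (f₁ + f₂) g = BW d f₁ g + BW d f₂ g := by
  simp only [BW, coeff_add, add_mul, mul_add, Finset.sum_add_distrib]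

lemma BW_smul_left (a : ℂ) (d : ℕ) (f g : MvPolynomial (Fin 2) ℂ) :
    BW d (a • f) g = a • BW d f g := by
  rw [BW, BW, smul_eq_mul, Finset.mul_sum]
  exact Finset.sum_congr rfl fun k _ => by rw [coeff_smul, smul_eq_mul]; ring

lemma BW_add_right (d : ℕ) (f g₁ g₂ : MvPolynomial (Fin 2) ℂ) :
    BW d f (g₁ + g₂) = BW d f g₁ + BW d f g₂ := by
  simp only [BW, coeff_add, mul_add, Finset.sum_add_distrib]

lemma BW_smul_right (a : ℂ) (d : ℕ) (f g : MvPolynomial (Fin 2) ℂ) :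
    BW d f (a • g) = a • BW d f g := by
  rw [BW, BW, smul_eq_mul, Finset.mul_sum]
  exact Finset.sum_congr rfl fun k _ => by rw [coeff_smul, smul_eq_mul]; ring

lemma BW_zero_right (d : ℕ) (f : MvPolynomial (Fin 2) ℂ) : BW d f 0 = 0 := by
  simp [BW]

lemma BW_X_zero_mul (d : ℕ) (f g : MvPolynomial (Fin 2) ℂ) :
    BW (d + 1) (X 0 * f) g = ((d : ℂ) + 1)⁻¹ * BW d f (pderiv 0 g) := by
  rw [BW, BW, Finset.sum_range_succ, Nat.sub_self, Finsupp.single_zero, zero_add, coeff_X_mul',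
    if_neg (by simp), mul_zero, zero_mul, add_zero, Finset.mul_sum]
  refine Finset.sum_congr rfl fun k hk => ?_
  have hk : k ≤ d := Nat.lt_succ_iff.mp (Finset.mem_range.mp hk)
  have hidx : Finsupp.single (0 : Fin 2) (d + 1 - k) + Finsupp.single 1 k
      = Finsupp.single 0 1 + (Finsupp.single 0 (d - k) + Finsupp.single 1 k) := by
    rw [← add_assoc, ← Finsupp.single_add, show 1 + (d - k) = d + 1 - k by omega]
  rw [hidx, coeff_X_mul, coeff_pderiv, add_comm _ (Finsupp.single 0 1), inv_choose_succ hk]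
  simp only [Finsupp.add_apply, Finsupp.single_eq_same, Finsupp.single_eq_of_ne Fin.zero_ne_one,
    add_zero]
  ring

lemma BW_X_one_mul (d : ℕ) (f g : MvPolynomial (Fin 2) ℂ) :
    BW (d + 1) (X 1 * f) g = ((d : ℂ) + 1)⁻¹ * BW d f (pderiv 1 g) := by
  rw [BW, BW, Finset.sum_range_succ', Finsupp.single_zero, add_zero, coeff_X_mul',
    if_neg (by simp), mul_zero, zero_mul, add_zero, Finset.mul_sum]
  refine Finset.sum_congr rfl fun k hk => ?_
  have hk : k ≤ d := Nat.lt_succ_iff.mp (Finset.mem_range.mp hk)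
  have hidx : Finsupp.single (0 : Fin 2) (d + 1 - (k + 1)) + Finsupp.single 1 (k + 1)
      = Finsupp.single 1 1 + (Finsupp.single 0 (d - k) + Finsupp.single 1 k) := by
    rw [add_left_comm, ← Finsupp.single_add, Nat.add_sub_add_right, add_comm 1 k]
  rw [hidx, coeff_X_mul, coeff_pderiv, add_comm _ (Finsupp.single 1 1), inv_choose_succ_succ hk]
  simp only [Finsupp.add_apply, Finsupp.single_eq_same,
    Finsupp.single_eq_of_ne Fin.zero_ne_one.symm, zero_add]
  ring

noncomputable def dirPDeriv (c : ℂ) :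
    Derivation ℂ (MvPolynomial (Fin 2) ℂ) (MvPolynomial (Fin 2) ℂ) :=
  pderiv 0 + c • pderiv 1

lemma dirPDeriv_apply (c : ℂ) (g : MvPolynomial (Fin 2) ℂ) :
    dirPDeriv c g = pderiv 0 g + c • pderiv 1 g :=
  rfl

lemma dirPDeriv_linearForm (c e : ℂ) :
    dirPDeriv c (X 0 + C e * X 1) = C (1 + c * e) := by
  simp [dirPDeriv_apply, pderiv_X, smul_eq_C_mul]

lemma BW_linearForm_mul (c : ℂ) (d : ℕ) (f g : MvPolynomial (Fin 2) ℂ) :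
    BW (d + 1) ((X 0 + C c * X 1) * f) g = ((d : ℂ) + 1)⁻¹ * BW d f (dirPDeriv c g) := by
  rw [add_mul, mul_assoc, ← smul_eq_C_mul, BW_add_left, BW_smul_left, BW_X_zero_mul, BW_X_one_mul,
    dirPDeriv_apply, BW_add_right, BW_smul_right, smul_eq_mul, smul_eq_mul]
  ring

lemma BW_linearForm_pow_mul_eq_zero (c : ℂ) {m : ℕ} {g : MvPolynomial (Fin 2) ℂ}
    (hg : (dirPDeriv c)^[m] g = 0) (d : ℕ) (f : MvPolynomial (Fin 2) ℂ) :
    BW (d + m) ((X 0 + C c * X 1) ^ m * f) g = 0 := by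
  induction m generalizing g with
  | zero => rw [Function.iterate_zero_apply] at hg; rw [hg, BW_zero_right]
  | succ m ih =>
    rw [pow_succ', mul_assoc, ← add_assoc, BW_linearForm_mul,
      ih (by rwa [← Function.iterate_succ_apply]), mul_zero]

theorem BW_isotropic_of_mul_self_eq_neg_one {c : ℂ} (hc : c * c = -1) (α : ℕ) {β : ℕ}
    (hβ : 0 < β) :
    BW (2 * α + β) (((X 0) ^ 2 + (X 1) ^ 2) ^ α * (X 0 + C c * X 1) ^ β)
      (((X 0) ^ 2 + (X 1) ^ 2) ^ α * (X 0 + C c * X 1) ^ β) = 0 := by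
  set u : MvPolynomial (Fin 2) ℂ := X 0 + C c * X 1
  set v : MvPolynomial (Fin 2) ℂ := X 0 + C (-c) * X 1
  have hsq : (X 0 ^ 2 + X 1 ^ 2 : MvPolynomial (Fin 2) ℂ) = u * v := by
    have hcc : (C c * C c : MvPolynomial (Fin 2) ℂ) = -1 := by rw [← C_mul, hc, C_neg, C_1]
    simp only [u, v, C_neg]
    linear_combination (X 1 : MvPolynomial (Fin 2) ℂ) ^ 2 * hcc
  have hu : dirPDeriv c u = 0 := by rw [dirPDeriv_linearForm, hc, add_neg_cancel, C_0]
  have hv : dirPDeriv c v = algebraMap ℂ _ (1 + c * -c) := dirPDeriv_linearForm c (-c)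
  have hkill : (dirPDeriv c)^[α + β] (u ^ (α + β) * v ^ α) = 0 :=
    Derivation.iterate_mul_pow_eq_zero _ (by rw [Derivation.leibniz_pow, hu, smul_zero, smul_zero])
      hv (by omega)
  rw [hsq, show 2 * α + β = α + (α + β) by ring, mul_pow, mul_right_comm, ← pow_add]
  exact BW_linearForm_pow_mul_eq_zero c hkill α _

/-- For `α ≥ 0`, `β > 0` and `d = 2α + β`, the forms `(x²+y²)^α (x+iy)^β` and
`(x²+y²)^α (x−iy)^β` are isotropic for the Bombieri–Weyl form. -/
theorem stmt_6 (α β : ℕ) (hβ : 0 < β) :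
    BW (2 * α + β) (((X 0) ^ 2 + (X 1) ^ 2) ^ α * (X 0 + C I * X 1) ^ β)
                   (((X 0) ^ 2 + (X 1) ^ 2) ^ α * (X 0 + C I * X 1) ^ β) = 0 ∧
    BW (2 * α + β) (((X 0) ^ 2 + (X 1) ^ 2) ^ α * (X 0 - C I * X 1) ^ β)
                   (((X 0) ^ 2 + (X 1) ^ 2) ^ α * (X 0 - C I * X 1) ^ β) = 0 := by
  refine ⟨BW_isotropic_of_mul_self_eq_neg_one I_mul_I α hβ, ?_⟩
  have h := BW_isotropic_of_mul_self_eq_neg_one (c := -I) (by rw [neg_mul_neg, I_mul_I]) α hβ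
  rwa [map_neg, neg_mul, ← sub_eq_add_neg] at h
end

section
/- Let q₂(z_0, z_1, z_2) = z_1⁴ + 16·z_0·z_1²·z_2 + 16·z_0²·z_2². The common zero set in ℂ³ of the three partial derivatives ∂q₂/∂z_0, ∂q₂/∂z_1, ∂q₂/∂z_2 equals {z ∈ ℂ³ : z_1 = z_2 = 0} ∪ {z ∈ ℂ³ : z_0 = z_1 = 0}. In particular, the quartic 𝒬 for n = 2 is singular exactly at the two points (1,0,0) and (0,0,1) of ℙ². -/
open MvPolynomial

lemma pd16 (i : Fin 3) : (pderiv i (16 : MvPolynomial (Fin 3) ℂ)) = 0 := by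
  rw [(map_ofNat (C : ℂ →+* MvPolynomial (Fin 3) ℂ) 16).symm, pderiv_C]

/-- The common zero set in `ℂ³` of the three partial derivatives of
`q₂ = z_1⁴ + 16 z_0 z_1² z_2 + 16 z_0² z_2²` is
`{z_1 = z_2 = 0} ∪ {z_0 = z_1 = 0}`: the quartic `𝒬` for `n = 2` is singular exactly at
the two points `(1,0,0)` and `(0,0,1)` of `ℙ²`. -/
theorem stmt_14 :
    {z : Fin 3 → ℂ | ∀ i : Fin 3,
        MvPolynomial.eval z (MvPolynomial.pderiv i
          ((X 1 : MvPolynomial (Fin 3) ℂ) ^ 4 + 16 * X 0 * (X 1) ^ 2 * X 2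
            + 16 * (X 0) ^ 2 * (X 2) ^ 2)) = 0}
      = {z : Fin 3 → ℂ | z 1 = 0 ∧ z 2 = 0} ∪ {z : Fin 3 → ℂ | z 0 = 0 ∧ z 1 = 0} := by
  ext z
  simp only [Set.mem_setOf_eq, Set.mem_union]
  constructor
  · intro h
    have h0 := h 0; have h1 := h 1; have h2 := h 2
    simp [pderiv_X, Pi.single_apply, pd16] at h0 h1 h2
    have hz1 : z 1 = 0 := by
      by_contra hne
      have hf : z 1 * (4 * z 1 ^ 2 + 32 * z 0 * z 2) = 0 := by linear_combination h1
      have e1 : 4 * z 1 ^ 2 + 32 * z 0 * z 2 = 0 := (mul_eq_zero.mp hf).resolve_left hne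
      have h' : z 0 ^ 2 * z 2 = 0 := by
        linear_combination (-1/96 : ℂ) * h2 + (z 0 / 24) * e1
      have e2 : z 0 * z 2 = 0 := by
        rcases mul_eq_zero.mp h' with h'' | h''
        · rw [sq_eq_zero_iff] at h''; rw [h'']; ring
        · rw [h'']; ring
      have : z 1 ^ 2 = 0 := by linear_combination (1/4 : ℂ) * e1 - 8 * e2
      exact hne (by rwa [sq_eq_zero_iff] at this)
    rw [hz1] at h0 h2
    have h0' : z 0 * z 2 ^ 2 = 0 := by linear_combination (1/32 : ℂ) * h0
    rcases mul_eq_zero.mp h0' with h'' | h''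
    · right; exact ⟨h'', hz1⟩
    · left; exact ⟨hz1, by rwa [sq_eq_zero_iff] at h''⟩
  · rintro (⟨h1, h2⟩ | ⟨h0, h1⟩) <;> intro i <;> fin_cases i <;>
      simp [pderiv_X, pderiv_mul, pderiv_pow, Pi.single_apply, pd16, h1, *]
end

section
/- The set of (z_0, z_1, z_2, z_3) ∈ ℂ⁴ satisfying the system 33·z_0·z_3² + 17·z_1·z_2·z_3 + 2·z_2³ = 0, 5·z_1·z_2² + 6·z_1²·z_3 + 17·z_0·z_2·z_3 = 0, 5·z_1²·z_2 + 6·z_0·z_2² + 17·z_0·z_1·z_3 = 0, and 2·z_1³ + 17·z_0·z_1·z_2 + 33·z_0²·z_3 = 0 equals {z ∈ ℂ⁴ : z_1 = z_2 = z_3 = 0} ∪ {z ∈ ℂ⁴ : z_0 = z_1 = z_2 = 0}. In particular, the quartic 𝒬 for n = 3 is singular exactly at the two points (1,0,0,0) and (0,0,0,1) of ℙ³. -/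
/-- The solution set in `ℂ⁴` of the system of the four partial derivatives of the quartic
`q₃` for `n = 3` is `{z_1 = z_2 = z_3 = 0} ∪ {z_0 = z_1 = z_2 = 0}`: the quartic `𝒬` for
`n = 3` is singular exactly at the two points `(1,0,0,0)` and `(0,0,0,1)` of `ℙ³`. -/
theorem stmt_16 :
    {z : Fin 4 → ℂ |
        33 * z 0 * (z 3) ^ 2 + 17 * z 1 * z 2 * z 3 + 2 * (z 2) ^ 3 = 0 ∧
        5 * z 1 * (z 2) ^ 2 + 6 * (z 1) ^ 2 * z 3 + 17 * z 0 * z 2 * z 3 = 0 ∧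
        5 * (z 1) ^ 2 * z 2 + 6 * z 0 * (z 2) ^ 2 + 17 * z 0 * z 1 * z 3 = 0 ∧
        2 * (z 1) ^ 3 + 17 * z 0 * z 1 * z 2 + 33 * (z 0) ^ 2 * z 3 = 0}
      = {z : Fin 4 → ℂ | z 1 = 0 ∧ z 2 = 0 ∧ z 3 = 0}
        ∪ {z : Fin 4 → ℂ | z 0 = 0 ∧ z 1 = 0 ∧ z 2 = 0} := by
  ext z
  simp only [Set.mem_setOf_eq, Set.mem_union]
  constructor
  · rintro ⟨h0, h1, h2, h3⟩
    have hb7 : z 1 ^ 7 = 0 := by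
      linear_combination ((-1983/640 : ℂ) * z 0^3 * z 2 + (51179/21120 : ℂ) * z 0^2 * z 1^2) * h1 + ((477409/79360 : ℂ) * z 0^3 * z 3 + (18389/15872 : ℂ) * z 0^2 * z 1 * z 2 + (-382687/261888 : ℂ) * z 0 * z 1^3) * h2 + ((-8115953/2618880 : ℂ) * z 0^2 * z 1 * z 3 + (3987/7936 : ℂ) * z 0^2 * z 2^2 + (-312613/523776 : ℂ) * z 0 * z 1^2 * z 2 + (1/2 : ℂ) * z 1^4) * h3
    have hb : z 1 = 0 := by
      exact pow_eq_zero_iff (by norm_num) |>.mp hb7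
    have hc7 : z 2 ^ 7 = 0 := by
      linear_combination ((-8579/8448 : ℂ) * z 1 * z 2^2 * z 3 + (1/2 : ℂ) * z 2^4) * h0 + ((11237/1280 : ℂ) * z 0 * z 3^3 + (32389/7920 : ℂ) * z 1 * z 2 * z 3^2 + (-5465/4224 : ℂ) * z 2^3 * z 3) * h1 + ((-1983/640 : ℂ) * z 1 * z 3^3 + (23209/25344 : ℂ) * z 2^2 * z 3^2) * h2 + ((-191029/42240 : ℂ) * z 2 * z 3^3) * h3
    have hc : z 2 = 0 := by
      exact pow_eq_zero_iff (by norm_num) |>.mp hc7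
    have e0 : z 0 * z 3 ^ 2 = 0 := by
      linear_combination (1/33 : ℂ) * h0 - (17/33 : ℂ) * z 2 * z 3 * hb - (2/33 : ℂ) * z 2 ^ 2 * hc
    have e3 : z 0 ^ 2 * z 3 = 0 := by
      linear_combination (1/33 : ℂ) * h3 - (2/33 : ℂ) * z 1 ^ 2 * hb - (17/33 : ℂ) * z 0 * z 2 * hb
    have had : (z 0 * z 3) ^ 3 = 0 := by
      linear_combination z 0 ^ 2 * z 3 * e0
    have had' : z 0 * z 3 = 0 := pow_eq_zero_iff (by norm_num) |>.mp had
    rcases mul_eq_zero.mp had' with ha | hd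
    · exact Or.inr ⟨ha, hb, hc⟩
    · exact Or.inl ⟨hb, hc, hd⟩
  · rintro (⟨h1, h2, h3⟩ | ⟨h0, h1, h2⟩)
    · exact ⟨by rw [h1, h2, h3]; ring, by rw [h1, h2, h3]; ring,
        by rw [h1, h2, h3]; ring, by rw [h1, h2, h3]; ring⟩
    · exact ⟨by rw [h0, h1, h2]; ring, by rw [h0, h1, h2]; ring,
        by rw [h0, h1, h2]; ring, by rw [h0, h1, h2]; ring⟩
end

section
/- Let q₄(z_0, …, z_4) = z_2⁴ + 14·z_1·z_2²·z_3 + 9·z_1²·z_3² + 20·z_0·z_2·z_3² + 20·z_1²·z_2·z_4 + 24·z_0·z_2²·z_4 + 88·z_0·z_1·z_3·z_4 + 144·z_0²·z_4². The common zero set in ℂ⁵ of the five partial derivatives ∂q₄/∂z_0, …, ∂q₄/∂z_4 equals {z ∈ ℂ⁵ : z_2 = z_3 = z_4 = 0} ∪ {z ∈ ℂ⁵ : z_0 = z_1 = z_2 = 0} ∪ {z ∈ ℂ⁵ : z_1 = z_3 = 0 and z_2² + 12·z_0·z_4 = 0}. That is, the singular locus of the quartic 𝒬 for n = 4 consists of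 the two tangent lines of the rational normal curve at (x+iy)⁴ and (x−iy)⁴ together with a smooth conic in the plane {z_1 = z_3 = 0}. -/
open MvPolynomial

/-- The quartic `𝒬` for `n = 4` in harmonic coordinates. -/
noncomputable def q4 : MvPolynomial (Fin 5) ℂ :=
  (X 2) ^ 4 + 14 * X 1 * (X 2) ^ 2 * X 3 + 9 * (X 1) ^ 2 * (X 3) ^ 2
    + 20 * X 0 * X 2 * (X 3) ^ 2 + 20 * (X 1) ^ 2 * X 2 * X 4 + 24 * X 0 * (X 2) ^ 2 * X 4
    + 88 * X 0 * X 1 * X 3 * X 4 + 144 * (X 0) ^ 2 * (X 4) ^ 2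

lemma pd_ofNat (n : ℕ) [n.AtLeastTwo] (i : Fin 5) :
    pderiv i (no_index (OfNat.ofNat n) : MvPolynomial (Fin 5) ℂ) = 0 := by
  rw [← map_ofNat (C : ℂ →+* MvPolynomial (Fin 5) ℂ) n, pderiv_C]

lemma pdq0 (z : Fin 5 → ℂ) : eval z (pderiv 0 q4) = 20 * z 2 * z 3 ^ 2 + 24 * z 2 ^ 2 * z 4 + 88 * z 1 * z 3 * z 4 + 288 * z 0 * z 4 ^ 2 := by
  simp [q4, pd_ofNat, Pi.single_apply]
  ring

lemma pdq1 (z : Fin 5 → ℂ) : eval z (pderiv 1 q4) = 14 * z 2 ^ 2 * z 3 + 18 * z 1 * z 3 ^ 2 + 40 * z 1 * z 2 * z 4 + 88 * z 0 * z 3 * z 4 := by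
  simp [q4, pd_ofNat, Pi.single_apply]
  ring

lemma pdq2 (z : Fin 5 → ℂ) : eval z (pderiv 2 q4) = 4 * z 2 ^ 3 + 28 * z 1 * z 2 * z 3 + 20 * z 0 * z 3 ^ 2 + 20 * z 1 ^ 2 * z 4 + 48 * z 0 * z 2 * z 4 := by
  simp [q4, pd_ofNat, Pi.single_apply]
  ring

lemma pdq3 (z : Fin 5 → ℂ) : eval z (pderiv 3 q4) = 14 * z 1 * z 2 ^ 2 + 18 * z 1 ^ 2 * z 3 + 40 * z 0 * z 2 * z 3 + 88 * z 0 * z 1 * z 4 := by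
  simp [q4, pd_ofNat, Pi.single_apply]
  ring

lemma pdq4 (z : Fin 5 → ℂ) : eval z (pderiv 4 q4) = 20 * z 1 ^ 2 * z 2 + 24 * z 0 * z 2 ^ 2 + 88 * z 0 * z 1 * z 3 + 288 * z 0 ^ 2 * z 4 := by
  simp [q4, pd_ofNat, Pi.single_apply]
  ring

/-- The common zero set in `ℂ⁵` of the five partial derivatives of `q₄` is the union of the
two tangent lines of the rational normal curve at `(x+iy)⁴` and `(x−iy)⁴` together with the
smooth conic `{z_1 = z_3 = 0, z_2² + 12 z_0 z_4 = 0}`. -/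
theorem stmt_18 :
    {z : Fin 5 → ℂ | ∀ i : Fin 5, MvPolynomial.eval z (MvPolynomial.pderiv i q4) = 0}
      = {z : Fin 5 → ℂ | z 2 = 0 ∧ z 3 = 0 ∧ z 4 = 0}
        ∪ {z : Fin 5 → ℂ | z 0 = 0 ∧ z 1 = 0 ∧ z 2 = 0}
        ∪ {z : Fin 5 → ℂ | z 1 = 0 ∧ z 3 = 0 ∧ (z 2) ^ 2 + 12 * z 0 * z 4 = 0} := by
  ext z
  simp only [Set.mem_union, Set.mem_setOf_eq]
  constructor
  · intro h
    have h0 : 20 * z 2 * z 3 ^ 2 + 24 * z 2 ^ 2 * z 4 + 88 * z 1 * z 3 * z 4 + 288 * z 0 * z 4 ^ 2 = 0 := by rw [← pdq0 z]; exact h 0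
    have h1 : 14 * z 2 ^ 2 * z 3 + 18 * z 1 * z 3 ^ 2 + 40 * z 1 * z 2 * z 4 + 88 * z 0 * z 3 * z 4 = 0 := by rw [← pdq1 z]; exact h 1
    have h2 : 4 * z 2 ^ 3 + 28 * z 1 * z 2 * z 3 + 20 * z 0 * z 3 ^ 2 + 20 * z 1 ^ 2 * z 4 + 48 * z 0 * z 2 * z 4 = 0 := by rw [← pdq2 z]; exact h 2
    have h3 : 14 * z 1 * z 2 ^ 2 + 18 * z 1 ^ 2 * z 3 + 40 * z 0 * z 2 * z 3 + 88 * z 0 * z 1 * z 4 = 0 := by rw [← pdq3 z]; exact h 3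
    have h4 : 20 * z 1 ^ 2 * z 2 + 24 * z 0 * z 2 ^ 2 + 88 * z 0 * z 1 * z 3 + 288 * z 0 ^ 2 * z 4 = 0 := by rw [← pdq4 z]; exact h 4
    have hbc : z 1 * z 2 = 0 := by
      have hp : (z 1 * z 2) ^ 4 = 0 := by
        linear_combination ((775/104448) * z 0 * z 1^4 + (-675/60928) * z 0^2 * z 1^2 * z 2) * h0 + ((-5707/7311360) * z 1^5 + (14321/609280) * z 0 * z 1^3 * z 2 + (-75/1904) * z 0^2 * z 1^2 * z 3) * h1 + ((5707/3655680) * z 1^4 * z 2 + (-102481/609280) * z 0 * z 1^2 * z 2^2 + (1025/365568) * z 0 * z 1^3 * z 3 + (2025/30464) * z 0^2 * z 1^2 * z 4) * h2 + ((589/19040) * z 1^3 * z 2^2 + (5707/7311360) * z 1^4 * z 3 + (60303/609280) * z 0 * z 1^2 * z 2 * z 3 + (-75/1904) * z 0 * z 1^3 * z 4) * h3 + ((102481/3655680) * z 1^2 * z 2^3 + (-6457/215040) * z 1^3 * z 2 * z 3 + (775/104448) * z 0 * z 1^2 * z 3^2) * h4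
      exact pow_eq_zero_iff (by norm_num) |>.mp hp
    have hbd : z 1 * z 3 = 0 := by
      have hp : (z 1 * z 3) ^ 4 = 0 := by
        linear_combination ((734927710003/2666822901120) * z 1^2 * z 2^3 + (-4114239709/21949159680) * z 1^3 * z 2 * z 3 + (-10918033/17291880) * z 0 * z 2^4 + (-459362112157/493856092800) * z 0 * z 1 * z 2^2 * z 3) * h0 + ((-4227300761779/4444704835200) * z 1 * z 2^4 + (-5172340971773/1904873500800) * z 1^2 * z 2^2 * z 3 + (7849/77760) * z 1^3 * z 3^2 + (-43672132/19453365) * z 0 * z 2^3 * z 3 + (-2824937785/6584747904) * z 0 * z 1 * z 2 * z 3^2 + (-120957732437/13718224800) * z 0 * z 1 * z 2^2 * z 4 + (11/20) * z 0 * z 1^2 * z 3 * z 4) * h1 + ((17018058277/47033913600) * z 1 * z 2^3 * z 3 + (58727766607/36581932800) * z 1^2 * z 2 * z 3^2 + (10918033/2881980) * z 0 * z 2^3 * z 4 + (459362112157/82309348800) * z 0 * z 1 * z 2 * z 3 * z 4) * h2 + ((316622957/373504608) * z 2^4 * z 3 + (69598212289/104172769575) * z 1 * z 2^2 * z 3^2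 + (43672132/19453365) * z 1 * z 2^3 * z 4 + (-3529/77760) * z 1^2 * z 3^3 + (-29793950141/32923739520) * z 1^2 * z 2 * z 3 * z 4) * h3 + ((2369213161/5602569120) * z 2^3 * z 3^2 + (-5629454333/21949159680) * z 1 * z 2 * z 3^3 + (1330535056807/493856092800) * z 1 * z 2^2 * z 3 * z 4 + (-121/720) * z 1^2 * z 3^2 * z 4) * h4
      exact pow_eq_zero_iff (by norm_num) |>.mp hp
    have hbe : z 1 * z 4 = 0 := by
      have hp : (z 1 * z 4) ^ 4 = 0 := by
        linear_combination ((-294128188817/107208769536000) * z 2^3 * z 3^2 + (4947785419/211067265024000) * z 2^4 * z 4 + (-12410547679/1719926784000) * z 1 * z 2 * z 3^3 + (-3229988969/1128701952000) * z 1 * z 2^2 * z 3 * z 4 + (39491133577/12865052344320) * z 1^2 * z 3^2 * z 4 + (-16242361159/1206098657280) * z 1^2 * z 2 * z 4^2 + (-17184317/7941390336) * z 0 * z 2 * z 3^2 * z 4 + (39945413/5211537408) * z 0 * z 2^2 * z 4^2) * h0 + ((15062185739/5025411072000) * z 2^2 * z 3^3 + (39945413/8794469376) * z 2^3 * z 3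 * z 4 + (1037993226719/643252617216000) * z 1 * z 3^4 + (2257367008649/84426906009600) * z 1 * z 2 * z 3^2 * z 4 + (-4681575911/732872448000) * z 1 * z 2^2 * z 4^2 + (-1/60) * z 1^2 * z 3 * z 4^2 + (111837647/11167580160) * z 0 * z 3^3 * z 4 + (39945413/1465744896) * z 0 * z 2 * z 3 * z 4^2) * h1 + ((1037993226719/321626308608000) * z 2 * z 3^4 + (1507769780893/3377076240384000) * z 2^2 * z 3^2 * z 4 + (-4947785419/35177877504000) * z 2^3 * z 4^2 + (54149148377/6432526172160) * z 1 * z 3^3 * z 4 + (-1637761933/844269060096) * z 1 * z 2 * z 3 * z 4^2 + (1/20) * z 1^2 * z 4^3 + (17184317/1323565056) * z 0 * z 3^2 * z 4^2 + (-39945413/868589568) * z 0 * z 2 * z 4^3) * h2 + ((-1037993226719/643252617216000) * z 3^5 + (-4532053656157/422134530048000) * z 2 * z 3^3 * z 4 + (-28425587/28553472000) * z 2^2 * z 3 * z 4^2 + (-17184317/2233516032) * z 1 * z 3^2 * z 4^2 + (39945413/1465744896) * z 1 * z 2 * z 4^3) * h3 + ((-50966265719/12865052344320) * z 3^4 * z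 4 + (-1238307803/241219731456) * z 2 * z 3^2 * z 4^2) * h4
      exact pow_eq_zero_iff (by norm_num) |>.mp hp
    have had : z 0 * z 3 = 0 := by
      have hp : (z 0 * z 3) ^ 4 = 0 := by
        linear_combination ((4117727399/743126630400) * z 0 * z 1^4 + (-1755278821/61927219200) * z 0^2 * z 1^2 * z 2) * h0 + ((5434981799/1486253260800) * z 1^5 + (-1968722821/123854438400) * z 0 * z 1^3 * z 2 + (-1/220) * z 0^2 * z 1 * z 2^2 + (4189/1675520) * z 0^2 * z 1^2 * z 3 + (-3/110) * z 0^3 * z 2 * z 3) * h1 + ((-5434981799/743126630400) * z 1^4 * z 2 + (-15927371399/619272192000) * z 0 * z 1^2 * z 2^2 + (-9722862599/168892416000) * z 0 * z 1^3 * z 3 + (-1/22) * z 0^2 * z 1 * z 2 * z 3 + (-12490830599/51606016000) * z 0^2 * z 1^2 * z 4 + (1/20) * z 0^3 * z 3^2) * h2 + ((37474177/3870451200) * z 1^3 * z 2^2 + (-5434981799/1486253260800) * z 1^4 * z 3 + (13271963/806344000) * z 0 * z 1 * z 2^3 + (58283532313/619272192000) * z 0 * z 1^2 * z 2 * z 3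 + (12357/335104) * z 0 * z 1^3 * z 4 + (1/220) * z 0^2 * z 2^2 * z 3 + (45313689/201586000) * z 0^2 * z 1 * z 2 * z 4) * h3 + ((-3949533029/743126630400) * z 1^2 * z 2^3 + (6061159/3973939200) * z 1^3 * z 2 * z 3 + (-9606763/483806400) * z 0 * z 1 * z 2^2 * z 3 + (9342836519/743126630400) * z 0 * z 1^2 * z 3^2) * h4
      exact pow_eq_zero_iff (by norm_num) |>.mp hp
    have hcd : z 2 * z 3 = 0 := by
      have hp : (z 2 * z 3) ^ 4 = 0 := by
        linear_combination ((102481/3655680) * z 2^3 * z 3^2 + (-6457/215040) * z 1 * z 2 * z 3^3 + (775/104448) * z 1^2 * z 3^2 * z 4 + (-675/60928) * z 0 * z 2 * z 3^2 * z 4) * h0 + ((589/19040) * z 2^2 * z 3^3 + (5707/7311360) * z 1 * z 3^4 + (1779/19040) * z 1 * z 2 * z 3^2 * z 4 + (-75/1904) * z 0 * z 3^3 * z 4) * h1 + ((5707/3655680) * z 2 * z 3^4 + (-102481/609280) * z 2^2 * z 3^2 * z 4 + (1025/365568) * z 1 * z 3^3 * z 4 + (2025/30464) * z 0 * z 3^2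 * z 4^2) * h2 + ((-5707/7311360) * z 3^5 + (79/2720) * z 2 * z 3^3 * z 4 + (-75/1904) * z 1 * z 3^2 * z 4^2) * h3 + ((775/104448) * z 3^4 * z 4) * h4
      exact pow_eq_zero_iff (by norm_num) |>.mp hp
    by_cases hb : z 1 = 0
    · by_cases hd : z 3 = 0
      · by_cases hc : z 2 = 0
        · have h00 : z 0 * z 4 ^ 2 = 0 := by
            linear_combination (1/288) * h0 - (11/36) * z 3 * z 4 * hb
              - ((1/12) * z 2 * z 4 + (5/72) * z 3 ^ 2) * hc
          rcases mul_eq_zero.mp h00 with ha | he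
          · exact Or.inl (Or.inr ⟨ha, hb, hc⟩)
          · exact Or.inl (Or.inl ⟨hc, hd, pow_eq_zero_iff (by norm_num) |>.mp he⟩)
        · refine Or.inr ⟨hb, hd, ?_⟩
          have hp : (z 2 * (z 2 ^ 2 + 12 * z 0 * z 4)) ^ 3 = 0 := by
            linear_combination ((1744308467/1829096640) * z 1^2 * z 2^4 + (-11320803/9032576) * z 1^3 * z 2^2 * z 3 + (-23959/11860) * z 0 * z 2^5 + (-432122849/67744320) * z 0 * z 1 * z 2^3 * z 3 + 6 * z 0^2 * z 2^3 * z 4) * h0 + ((-33083223077/6706687680) * z 1 * z 2^5 + (-7748565335/574858944) * z 1^2 * z 2^3 * z 3 + (-3552347/293535) * z 0 * z 2^4 * z 3 + (-9468225/4516288) * z 0 * z 1 * z 2^2 * z 3^2 + (-240215691/5645360) * z 0 * z 1 * z 2^3 * z 4) * h1 + ((1/4) * z 2^6 + (11872521/6451840) * z 1 * z 2^4 * z 3 + (334271691/45162880) * z 1^2 * z 2^2 * z 3^2 + (107457/5930) * z 0 * z 2^4 * z 4 + (307924929/11290720) * z 0 * z 1 * z 2^2 * z 3 * z 4) * h2 +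 ((11009975/2817936) * z 2^5 * z 3 + (2987108741/628751970) * z 1 * z 2^3 * z 3^2 + (3552347/293535) * z 1 * z 2^4 * z 4 + (-9468225/4516288) * z 1^2 * z 2^2 * z 3 * z 4) * h3 + ((7772723/3842640) * z 2^4 * z 3^2 + (-11320803/9032576) * z 1 * z 2^2 * z 3^3 + (880790867/67744320) * z 1 * z 2^3 * z 3 * z 4) * h4
          rcases mul_eq_zero.mp (pow_eq_zero_iff (n := 3) (by norm_num) |>.mp hp) with h' | h'
          · exact absurd h' hc
          · exact h'
      · refine Or.inl (Or.inr ⟨?_, hb, ?_⟩)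
        · exact (mul_eq_zero.mp had).resolve_right hd
        · exact (mul_eq_zero.mp hcd).resolve_right hd
    · exact Or.inl (Or.inl ⟨(mul_eq_zero.mp hbc).resolve_left hb,
        (mul_eq_zero.mp hbd).resolve_left hb, (mul_eq_zero.mp hbe).resolve_left hb⟩)
  · rintro ((⟨h2, h3, h4⟩ | ⟨h0, h1, h2⟩) | ⟨h1, h3, hc⟩) i <;> fin_cases i
    · exact (pdq0 z).trans (by rw [h2, h3, h4]; ring)
    · exact (pdq1 z).trans (by rw [h2, h3, h4]; ring)
    · exact (pdq2 z).trans (by rw [h2, h3, h4]; ring)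
    · exact (pdq3 z).trans (by rw [h2, h3, h4]; ring)
    · exact (pdq4 z).trans (by rw [h2, h3, h4]; ring)
    · exact (pdq0 z).trans (by rw [h0, h1, h2]; ring)
    · exact (pdq1 z).trans (by rw [h0, h1, h2]; ring)
    · exact (pdq2 z).trans (by rw [h0, h1, h2]; ring)
    · exact (pdq3 z).trans (by rw [h0, h1, h2]; ring)
    · exact (pdq4 z).trans (by rw [h0, h1, h2]; ring)
    · exact (pdq0 z).trans (by linear_combination (88 * z 3 * z 4) * h1 + (20 * z 2 * z 3) * h3 + (24 * z 4) * hc)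
    · exact (pdq1 z).trans (by linear_combination (18 * z 3 ^ 2 + 40 * z 2 * z 4) * h1 + (14 * z 2 ^ 2 + 88 * z 0 * z 4) * h3)
    · exact (pdq2 z).trans (by linear_combination (28 * z 2 * z 3 + 20 * z 1 * z 4) * h1 + (20 * z 0 * z 3) * h3 + (4 * z 2) * hc)
    · exact (pdq3 z).trans (by linear_combination (14 * z 2 ^ 2 + 18 * z 1 * z 3 + 88 * z 0 * z 4) * h1 + (40 * z 0 * z 2) * h3)
    · exact (pdq4 z).trans (by linear_combination (20 * z 1 * z 2 + 88 * z 0 * z 3) * h1 + (24 * z 0) * hc)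
end
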